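/- Let M1 = [[0,0],[0,1]], M2 = [[3/4, −√3/4],[−√3/4, 1/4]], M3 = [[3/4, √3/4],[√3/4, 1/4]], ε = [[0,1],[−1,0]], and let Q be a real 2×2 orthogonal matrix. Then conjugation by Q permutes the set {M1, M2, M3} and satisfies Q ε Qᵀ = ε if and only if Q is a power of the rotation R_{π/3} = [[1/2, −√3/2],[√3/2, 1/2]], i.e. Q ∈ {R_{π/3}^k : k = 0,…,5}. In other words, the structural tensor set {M1, M2, M3, ε} characterizes the 2D point group C6 of rotations by multiples of π/3. -/
import Mathlib


open Matrix

/-- `M1 = v1 ⊗ v1 = [[0,0],[0,1]]`. -/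
noncomputable def M1 : Matrix (Fin 2) (Fin 2) ℝ := !![0, 0; 0, 1]

/-- `M2 = v2 ⊗ v2 = [[3/4, -√3/4],[-√3/4, 1/4]]`. -/
noncomputable def M2 : Matrix (Fin 2) (Fin 2) ℝ :=
  !![3 / 4, -(Real.sqrt 3 / 4); -(Real.sqrt 3 / 4), 1 / 4]

/-- `M3 = v3 ⊗ v3 = [[3/4, √3/4],[√3/4, 1/4]]`. -/
noncomputable def M3 : Matrix (Fin 2) (Fin 2) ℝ :=
  !![3 / 4, Real.sqrt 3 / 4; Real.sqrt 3 / 4, 1 / 4]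

/-- The 2D permutation tensor ε = [[0,1],[-1,0]]. -/
noncomputable def eps : Matrix (Fin 2) (Fin 2) ℝ := !![0, 1; -1, 0]

/-- The rotation `R_{π/3} = [[1/2, -√3/2],[√3/2, 1/2]]`. -/
noncomputable def rotPiOver3 : Matrix (Fin 2) (Fin 2) ℝ :=
  !![1 / 2, -(Real.sqrt 3 / 2); Real.sqrt 3 / 2, 1 / 2]

lemma tfin2 (a b c d : ℝ) : (!![a,b;c,d])ᵀ = !![a,c;b,d] := by
  ext i j; fin_cases i <;> fin_cases j <;> rfl

lemma hs3 : Real.sqrt 3 * Real.sqrt 3 = 3 := Real.mul_self_sqrt (by norm_num)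

lemma eta2 (a b c d e f g h : ℝ) (h1 : a = e) (h2 : b = f) (h3 : c = g) (h4 : d = h) :
    !![a,b;c,d] = !![e,f;g,h] := by rw [h1,h2,h3,h4]

lemma negconj (Q M : Matrix (Fin 2) (Fin 2) ℝ) : (-Q) * M * (-Q)ᵀ = Q * M * Qᵀ := by
  rw [Matrix.transpose_neg]
  simp [Matrix.neg_mul, Matrix.mul_neg]

lemma prodM1 (a b : ℝ) : !![a,b;-b,a] * M1 * !![a,-b;b,a] = !![b*b, a*b; a*b, a*a] := by
  rw [M1, Matrix.mul_fin_two, Matrix.mul_fin_two]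
  exact eta2 _ _ _ _ _ _ _ _ (by ring) (by ring) (by ring) (by ring)

lemma prodEps (a b c d : ℝ) :
    !![a,b;c,d] * eps * !![a,c;b,d] = !![0, a*d-b*c; b*c-a*d, 0] := by
  rw [eps, Matrix.mul_fin_two, Matrix.mul_fin_two]
  exact eta2 _ _ _ _ _ _ _ _ (by ring) (by ring) (by ring) (by ring)

lemma C1 : rotPiOver3 * M1 * rotPiOver3ᵀ = M2 := by
  rw [rotPiOver3, M1, M2, tfin2, Matrix.mul_fin_two, Matrix.mul_fin_two]
  exact eta2 _ _ _ _ _ _ _ _ (by linear_combination (1/4) * hs3) (by ring) (by ring) (by ring)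

lemma C2 : rotPiOver3 * M2 * rotPiOver3ᵀ = M3 := by
  rw [rotPiOver3, M2, M3, tfin2, Matrix.mul_fin_two, Matrix.mul_fin_two]
  exact eta2 _ _ _ _ _ _ _ _ (by linear_combination (3/16) * hs3)
    (by linear_combination (Real.sqrt 3/16) * hs3)
    (by linear_combination (Real.sqrt 3/16) * hs3)
    (by linear_combination (1/16) * hs3)

lemma C3 : rotPiOver3 * M3 * rotPiOver3ᵀ = M1 := by
  rw [rotPiOver3, M3, M1, tfin2, Matrix.mul_fin_two, Matrix.mul_fin_two]
  exact eta2 _ _ _ _ _ _ _ _ (by linear_combination (-1/16) * hs3)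
    (by linear_combination (-(Real.sqrt 3)/16) * hs3)
    (by linear_combination (-(Real.sqrt 3)/16) * hs3)
    (by linear_combination (5/16) * hs3)

lemma Ceps : rotPiOver3 * eps * rotPiOver3ᵀ = eps := by
  rw [rotPiOver3, eps, tfin2, Matrix.mul_fin_two, Matrix.mul_fin_two]
  exact eta2 _ _ _ _ _ _ _ _ (by ring) (by linear_combination (1/4) * hs3)
    (by linear_combination (-1/4) * hs3) (by ring)

lemma Rsq : rotPiOver3 ^ 2 = !![-(1/2), -(Real.sqrt 3/2); Real.sqrt 3/2, -(1/2)] := by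
  rw [pow_two, rotPiOver3, Matrix.mul_fin_two]
  exact eta2 _ _ _ _ _ _ _ _ (by linear_combination (-1/4) * hs3) (by ring) (by ring)
    (by linear_combination (-1/4) * hs3)

lemma negone : (-1 : Matrix (Fin 2) (Fin 2) ℝ) = !![-1,0;0,-1] := by
  ext i j; fin_cases i <;> fin_cases j <;> simp [Matrix.one_apply]

lemma R3 : rotPiOver3 ^ 3 = -1 := by
  rw [pow_succ, Rsq, rotPiOver3, Matrix.mul_fin_two, negone]
  exact eta2 _ _ _ _ _ _ _ _ (by linear_combination (-1/4) * hs3) (by ring) (by ring)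
    (by linear_combination (-1/4) * hs3)

lemma R4 : rotPiOver3 ^ 4 = -rotPiOver3 := by
  rw [pow_succ, R3, neg_one_mul]

lemma R5 : rotPiOver3 ^ 5 = -(rotPiOver3 ^ 2) := by
  rw [show (5:ℕ) = 2+3 from rfl, pow_add, R3, mul_neg_one]

lemma R4e : rotPiOver3 ^ 4 = !![-(1/2), Real.sqrt 3/2; -(Real.sqrt 3/2), -(1/2)] := by
  rw [R4, rotPiOver3]; ext i j; fin_cases i <;> fin_cases j <;> simp

lemma R5e : rotPiOver3 ^ 5 = !![1/2, Real.sqrt 3/2; -(Real.sqrt 3/2), 1/2] := by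
  rw [R5, Rsq]; ext i j; fin_cases i <;> fin_cases j <;> simp

lemma rot3 {α : Type*} (x y z : α) : ({y, z, x} : Set α) = {x, y, z} := by
  ext w; simp only [Set.mem_insert_iff, Set.mem_singleton_iff]; tauto

lemma rot3' {α : Type*} (x y z : α) : ({z, x, y} : Set α) = {x, y, z} := by
  ext w; simp only [Set.mem_insert_iff, Set.mem_singleton_iff]; tauto

lemma conj_sq (M : Matrix (Fin 2) (Fin 2) ℝ) :
    rotPiOver3 ^ 2 * M * (rotPiOver3 ^ 2)ᵀ
      = rotPiOver3 * (rotPiOver3 * M * rotPiOver3ᵀ) * rotPiOver3ᵀ := by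
  rw [pow_two, Matrix.transpose_mul]
  simp only [Matrix.mul_assoc]

lemma D1 : rotPiOver3 ^ 2 * M1 * (rotPiOver3 ^ 2)ᵀ = M3 := by rw [conj_sq, C1, C2]
lemma D2 : rotPiOver3 ^ 2 * M2 * (rotPiOver3 ^ 2)ᵀ = M1 := by rw [conj_sq, C2, C3]
lemma D3 : rotPiOver3 ^ 2 * M3 * (rotPiOver3 ^ 2)ᵀ = M2 := by rw [conj_sq, C3, C1]
lemma Deps : rotPiOver3 ^ 2 * eps * (rotPiOver3 ^ 2)ᵀ = eps := by rw [conj_sq, Ceps, Ceps]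

/-- For `Q ∈ O(2)`, conjugation by `Q` permutes the set `{M1, M2, M3}` and fixes ε
iff `Q` is a power `R_{π/3}^k`, `k = 0, …, 5`: the structural tensor set
`{M1, M2, M3, ε}` characterizes the 2D point group `C6` of rotations by multiples
of `π/3`. -/
theorem stmt_8 (Q : Matrix (Fin 2) (Fin 2) ℝ) (hQ : Q * Qᵀ = 1) :
    (({Q * M1 * Qᵀ, Q * M2 * Qᵀ, Q * M3 * Qᵀ} : Set (Matrix (Fin 2) (Fin 2) ℝ)) =
        {M1, M2, M3} ∧ Q * eps * Qᵀ = eps) ↔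
    ∃ k : ℕ, k ≤ 5 ∧ Q = rotPiOver3 ^ k := by
  constructor
  · rintro ⟨hset, heps⟩
    obtain ⟨a, b, c, d, rfl⟩ : ∃ a b c d, Q = !![a,b;c,d] :=
      ⟨Q 0 0, Q 0 1, Q 1 0, Q 1 1, by ext i j; fin_cases i <;> fin_cases j <;> rfl⟩
    have mem1 : !![a,b;c,d] * M1 * (!![a,b;c,d])ᵀ ∈ ({M1, M2, M3} : Set _) := by
      rw [← hset]; exact Set.mem_insert _ _
    rw [tfin2] at hQ heps mem1
    rw [Matrix.mul_fin_two, Matrix.one_fin_two] at hQ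
    have h1 : a*a + b*b = 1 := by have := congrFun (congrFun hQ 0) 0; simpa using this
    have h2 : a*c + b*d = 0 := by have := congrFun (congrFun hQ 0) 1; simpa using this
    rw [prodEps] at heps
    have hdet : a*d - b*c = 1 := by
      have := congrFun (congrFun heps 0) 1; simpa [eps] using this
    have hd : d = a := by linear_combination a*hdet + b*h2 - d*h1
    have hc : c = -b := by linear_combination a*h2 - c*h1 - b*hdet
    subst hd; subst hc
    rw [prodM1] at mem1
    simp only [Set.mem_insert_iff, Set.mem_singleton_iff] at mem1
    rcases mem1 with h | h | h
    · rw [M1] at h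
      have e00 : b*b = 0 := by have := congrFun (congrFun h 0) 0; simpa using this
      have e11 : d*d = 1 := by have := congrFun (congrFun h 1) 1; simpa using this
      have hb : b = 0 := by nlinarith [sq_nonneg b]
      subst hb
      have hfac : (d - 1) * (d + 1) = 0 := by linear_combination e11
      rcases mul_eq_zero.mp hfac with ha | ha
      · exact ⟨0, by norm_num, by
          rw [pow_zero, Matrix.one_fin_two]
          exact eta2 _ _ _ _ _ _ _ _ (by linarith) rfl (by norm_num) (by linarith)⟩
      · exact ⟨3, by norm_num, by
          rw [R3, negone]
          exact eta2 _ _ _ _ _ _ _ _ (by linarith) rfl (by norm_num) (by linarith)⟩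
    · rw [M2] at h
      have e01 : d*b = -(Real.sqrt 3/4) := by
        have := congrFun (congrFun h 0) 1; simpa using this
      have e11 : d*d = 1/4 := by have := congrFun (congrFun h 1) 1; simpa using this
      have hfac : (d - 1/2) * (d + 1/2) = 0 := by linear_combination e11
      rcases mul_eq_zero.mp hfac with ha | ha
      · have ha' : d = 1/2 := by linarith
        rw [ha'] at e01
        have hb : b = -(Real.sqrt 3/2) := by linarith
        exact ⟨1, by norm_num, by
          rw [pow_one, rotPiOver3]
          exact eta2 _ _ _ _ _ _ _ _ ha' hb (by rw [hb]; ring) ha'⟩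
      · have ha' : d = -(1/2) := by linarith
        rw [ha'] at e01
        have hb : b = Real.sqrt 3/2 := by linarith
        exact ⟨4, by norm_num, by
          rw [R4e]
          exact eta2 _ _ _ _ _ _ _ _ ha' hb (by rw [hb]) ha'⟩
    · rw [M3] at h
      have e01 : d*b = Real.sqrt 3/4 := by
        have := congrFun (congrFun h 0) 1; simpa using this
      have e11 : d*d = 1/4 := by have := congrFun (congrFun h 1) 1; simpa using this
      have hfac : (d - 1/2) * (d + 1/2) = 0 := by linear_combination e11
      rcases mul_eq_zero.mp hfac with ha | ha
      · have ha' : d = 1/2 := by linarith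
        rw [ha'] at e01
        have hb : b = Real.sqrt 3/2 := by linarith
        exact ⟨5, by norm_num, by
          rw [R5e]
          exact eta2 _ _ _ _ _ _ _ _ ha' hb (by rw [hb]) ha'⟩
      · have ha' : d = -(1/2) := by linarith
        rw [ha'] at e01
        have hb : b = -(Real.sqrt 3/2) := by linarith
        exact ⟨2, by norm_num, by
          rw [Rsq]
          exact eta2 _ _ _ _ _ _ _ _ ha' hb (by rw [hb]; ring) ha'⟩
  · rintro ⟨k, hk, rfl⟩
    interval_cases k
    · constructor <;> simp
    · rw [pow_one]
      exact ⟨by rw [C1, C2, C3]; exact rot3 M1 M2 M3, Ceps⟩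
    · exact ⟨by rw [D1, D2, D3]; exact rot3' M1 M2 M3, Deps⟩
    · rw [R3]
      simp only [negconj]
      constructor <;> simp
    · rw [R4]
      simp only [negconj]
      exact ⟨by rw [C1, C2, C3]; exact rot3 M1 M2 M3, Ceps⟩
    · rw [R5]
      simp only [negconj]
      exact ⟨by rw [D1, D2, D3]; exact rot3' M1 M2 M3, Deps⟩
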